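/- Let H ∈ (0,1), T > 0, a ∈ ℝ, σ > 0, and let K : [0,T] × [0,T] → ℝ be a nonnegative measurable function with K(s,r) = 0 whenever r > s, satisfying ∫₀^{min(s,t)} K(s,r) K(t,r) dr = (s^{2H} + t^{2H} − |t − s|^{2H})/2 for all s, t ∈ [0,T]. Let B be a fractional Brownian motion with Hurst index H on [0,T]. Then for every p ≥ 1, the random variable (∫₀ᵀ (∫_rᵀ σ K(s,r) e^{a s + σ B_s} ds)² dr)^{−1} has finite p-th moment: E[(∫₀ᵀ (∫_rᵀ σ K(s,r) e^{a s + σ B_s} ds)² dr)^{−p}] < ∞. -/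

import Mathlib

open MeasureTheory ProbabilityTheory Set

/-- A fractional Brownian motion with Hurst index `H` on `[0, T]`:
a process with continuous sample paths whose finite linear combinations of values
are centered Gaussian, with the fBm covariance function. -/
def IsFractionalBM {Ω : Type*} [MeasurableSpace Ω] (P : Measure Ω)
    (H T : ℝ) (B : ℝ → Ω → ℝ) : Prop :=
  (∀ ω, ContinuousOn (fun s => B s ω) (Icc 0 T)) ∧
  (∀ s ∈ Icc (0:ℝ) T, Measurable (B s)) ∧
  (∀ (n : ℕ) (c : Fin n → ℝ) (s : Fin n → ℝ), (∀ i, s i ∈ Icc (0:ℝ) T) →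
    ∃ v : NNReal, P.map (fun ω => ∑ i, c i * B (s i) ω) = gaussianReal 0 v) ∧
  (∀ s ∈ Icc (0:ℝ) T, ∀ t ∈ Icc (0:ℝ) T,
    ∫ ω, B s ω * B t ω ∂P = (s ^ (2*H) + t ^ (2*H) - |t - s| ^ (2*H)) / 2)

/-!
Write `φ(s) = a s + σ B_s` and `c = ∫∫ K > 0`. Cauchy–Schwarz with the weights `e^{±φ(s)}` gives
`c² ≤ (∫∫ K e^{φ}) (∫∫ K e^{-φ})`. After exchanging the integrals the first factor is
`σ⁻¹ ∫ D_r F dr ≤ σ⁻¹ (T ∫ |D_r F|² dr)^{1/2}`. By the diagonal covariance identity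
`∫ K(s,r)² dr = s^{2H}` every row integral `∫ K(s,r) dr` is at most `T^{H+1/2}`, so the second factor
is at most `T^{H+1/2} ∫ e^{-φ}`. Hence `∫ |D_r F|² dr ≥ D (∫ e^{-φ})^{-2}` with a deterministic
`D > 0`, and Jensen in time bounds the `p`-th negative moment by a multiple of `∫ E e^{-2pφ(s)} ds`,
finite since each `φ(s)` is Gaussian with bounded mean and variance. No bound on the supremum of `B`
(Fernique) is needed.
-/

open Real
open scoped ENNReal NNReal

section LIntegralInequalities

variable {α : Type*} [MeasurableSpace α] {μ : Measure α}

theorem sq_lintegral_mul_le {f g : α → ℝ≥0∞} (hf : AEMeasurable f μ) (hg : AEMeasurable g μ) :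
    (∫⁻ a, f a * g a ∂μ) ^ 2 ≤ (∫⁻ a, f a ^ 2 ∂μ) * ∫⁻ a, g a ^ 2 ∂μ := by
  have hCS := ENNReal.lintegral_mul_le_Lp_mul_Lq μ Real.HolderConjugate.two_two hf hg
  simp only [Pi.mul_apply, ENNReal.rpow_two] at hCS
  calc (∫⁻ a, f a * g a ∂μ) ^ 2
      ≤ ((∫⁻ a, f a ^ 2 ∂μ) ^ (1 / 2 : ℝ) * (∫⁻ a, g a ^ 2 ∂μ) ^ (1 / 2 : ℝ)) ^ 2 := by
        gcongr
    _ = (∫⁻ a, f a ^ 2 ∂μ) * ∫⁻ a, g a ^ 2 ∂μ := by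
        rw [mul_pow, ← ENNReal.rpow_natCast, ← ENNReal.rpow_natCast, ← ENNReal.rpow_mul,
          ← ENNReal.rpow_mul]
        norm_num

theorem sq_lintegral_le_measure_univ_mul {f : α → ℝ≥0∞} (hf : AEMeasurable f μ) :
    (∫⁻ a, f a ∂μ) ^ 2 ≤ μ univ * ∫⁻ a, f a ^ 2 ∂μ := by
  simpa [mul_comm] using sq_lintegral_mul_le hf (aemeasurable_const (b := (1 : ℝ≥0∞)))

theorem sq_lintegral_le_mul_of_mul_eq_one {h f g : α → ℝ≥0∞} (hh : AEMeasurable h μ)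
    (hf : AEMeasurable f μ) (hg : AEMeasurable g μ) (hfg : ∀ a, f a * g a = 1) :
    (∫⁻ a, h a ∂μ) ^ 2 ≤ (∫⁻ a, h a * f a ∂μ) * ∫⁻ a, h a * g a ∂μ := by
  have hsqrt : ∀ x : ℝ≥0∞, (x ^ (1 / 2 : ℝ)) ^ 2 = x := fun x => by
    rw [← ENNReal.rpow_natCast, ← ENNReal.rpow_mul]; norm_num
  have hprod : ∀ a, (h a * f a) ^ (1 / 2 : ℝ) * (h a * g a) ^ (1 / 2 : ℝ) = h a := fun a => by
    rw [← ENNReal.mul_rpow_of_nonneg _ _ (by norm_num), mul_mul_mul_comm, hfg, mul_one,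
      ← pow_two, ← ENNReal.rpow_natCast, ← ENNReal.rpow_mul]
    norm_num
  simpa only [hprod, hsqrt] using sq_lintegral_mul_le (μ := μ)
    (f := fun a => (h a * f a) ^ (1 / 2 : ℝ)) (g := fun a => (h a * g a) ^ (1 / 2 : ℝ))
    ((hh.mul hf).pow_const _) ((hh.mul hg).pow_const _)

theorem rpow_lintegral_le {f : α → ℝ≥0∞} (hf : AEMeasurable f μ) {q : ℝ} (hq : 1 < q) :
    (∫⁻ a, f a ∂μ) ^ q ≤ μ univ ^ (q - 1) * ∫⁻ a, f a ^ q ∂μ := by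
  have hq0 : 0 < q := one_pos.trans hq
  have hHolder := ENNReal.lintegral_mul_le_Lp_mul_Lq μ (Real.HolderConjugate.conjExponent hq) hf
    (aemeasurable_const (b := (1 : ℝ≥0∞)))
  simp only [Pi.mul_apply, mul_one, ENNReal.one_rpow, lintegral_const, one_mul] at hHolder
  calc (∫⁻ a, f a ∂μ) ^ q
      ≤ ((∫⁻ a, f a ^ q ∂μ) ^ (1 / q) * μ univ ^ (1 / q.conjExponent)) ^ q := by gcongr
    _ = μ univ ^ (q - 1) * ∫⁻ a, f a ^ q ∂μ := by
        rw [ENNReal.mul_rpow_of_nonneg _ _ hq0.le, ← ENNReal.rpow_mul, ← ENNReal.rpow_mul,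
          one_div_mul_cancel hq0.ne', ENNReal.rpow_one, mul_comm, Real.conjExponent]
        congr 2
        field_simp

theorem pow_four_lintegral_lintegral_le [SFinite μ] {k : α → α → ℝ≥0∞} {F G : α → ℝ≥0∞}
    {W : ℝ≥0∞} (hk : AEMeasurable (Function.uncurry k) (μ.prod μ)) (hF : AEMeasurable F μ)
    (hG : AEMeasurable G μ) (hFG : ∀ s, F s * G s = 1) (hW : ∀ᵐ s ∂μ, ∫⁻ r, k s r ∂μ ≤ W) :
    (∫⁻ s, ∫⁻ r, k s r ∂μ ∂μ) ^ 4
      ≤ μ univ * W ^ 2 * (∫⁻ s, G s ∂μ) ^ 2 * ∫⁻ r, (∫⁻ s, k s r * F s ∂μ) ^ 2 ∂μ := by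
  have hkF : AEMeasurable (Function.uncurry fun s r => k s r * F s) (μ.prod μ) :=
    hk.mul hF.comp_fst
  have hF_ne_top : ∀ s, F s ≠ ⊤ := fun s hs => by
    simpa [hs, ENNReal.top_mul (right_ne_zero_of_mul_eq_one (hFG s))] using hFG s
  have hweighted : (∫⁻ s, ∫⁻ r, k s r ∂μ ∂μ) ^ 2
      ≤ (∫⁻ s, (∫⁻ r, k s r ∂μ) * F s ∂μ) * ∫⁻ s, (∫⁻ r, k s r ∂μ) * G s ∂μ :=
    sq_lintegral_le_mul_of_mul_eq_one hk.lintegral_prod_right hF hG hFG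
  have hswap : ∫⁻ s, (∫⁻ r, k s r ∂μ) * F s ∂μ = ∫⁻ r, ∫⁻ s, k s r * F s ∂μ ∂μ := by
    simp_rw [← lintegral_mul_const' _ _ (hF_ne_top _)]
    exact lintegral_lintegral_swap hkF
  have hCS : (∫⁻ r, ∫⁻ s, k s r * F s ∂μ ∂μ) ^ 2
      ≤ μ univ * ∫⁻ r, (∫⁻ s, k s r * F s ∂μ) ^ 2 ∂μ :=
    sq_lintegral_le_measure_univ_mul hkF.lintegral_prod_left
  have hbound : ∫⁻ s, (∫⁻ r, k s r ∂μ) * G s ∂μ ≤ W * ∫⁻ s, G s ∂μ := by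
    rw [← lintegral_const_mul'' _ hG]
    exact lintegral_mono_ae (hW.mono fun s hs => by gcongr)
  calc (∫⁻ s, ∫⁻ r, k s r ∂μ ∂μ) ^ 4 = ((∫⁻ s, ∫⁻ r, k s r ∂μ ∂μ) ^ 2) ^ 2 := by ring
    _ ≤ ((∫⁻ s, (∫⁻ r, k s r ∂μ) * F s ∂μ) * ∫⁻ s, (∫⁻ r, k s r ∂μ) * G s ∂μ) ^ 2 := by
        gcongr
    _ ≤ ((∫⁻ r, ∫⁻ s, k s r * F s ∂μ ∂μ) ^ 2) * (W * ∫⁻ s, G s ∂μ) ^ 2 := by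
        rw [mul_pow, hswap]; gcongr
    _ ≤ (μ univ * ∫⁻ r, (∫⁻ s, k s r * F s ∂μ) ^ 2 ∂μ) * (W * ∫⁻ s, G s ∂μ) ^ 2 := by
        gcongr
    _ = _ := by ring

end LIntegralInequalities

theorem rpow_neg_le_of_le_mul_sq {D x L p : ℝ} (hD : 0 < D) (hL : 0 ≤ L) (hp : 0 ≤ p)
    (h : D ≤ x * L ^ 2) : x ^ (-p) ≤ D ^ (-p) * L ^ (2 * p) := by
  have hL' : 0 < L := hL.lt_of_ne <| by rintro rfl; simp at h; linarith
  have hx : D / L ^ 2 ≤ x := (div_le_iff₀ (by positivity)).2 h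
  calc x ^ (-p) ≤ (D / L ^ 2) ^ (-p) := rpow_le_rpow_of_nonpos (by positivity) hx (by linarith)
    _ = D ^ (-p) * L ^ (2 * p) := by
        rw [div_rpow hD.le (sq_nonneg L), ← rpow_natCast L 2, ← rpow_mul hL, Nat.cast_ofNat,
          show (2:ℝ) * -p = -(2 * p) by ring, rpow_neg hL, div_inv_eq_mul]

structure IsVolterraKernel (H T : ℝ) (K : ℝ → ℝ → ℝ) : Prop where
  measurable : Measurable (Function.uncurry K)
  nonneg : ∀ s ∈ Icc (0:ℝ) T, ∀ r ∈ Icc (0:ℝ) T, 0 ≤ K s r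
  eq_zero_of_lt : ∀ s ∈ Icc (0:ℝ) T, ∀ r ∈ Icc (0:ℝ) T, s < r → K s r = 0
  integral_mul : ∀ s ∈ Icc (0:ℝ) T, ∀ t ∈ Icc (0:ℝ) T,
    ∫ r in (0:ℝ)..(min s t), K s r * K t r = (s ^ (2*H) + t ^ (2*H) - |t - s| ^ (2*H)) / 2

namespace IsVolterraKernel

variable {H T : ℝ} {K : ℝ → ℝ → ℝ}

theorem integral_mul_self (hK : IsVolterraKernel H T K) (hH : 0 < H) {s : ℝ} (hs : s ∈ Icc 0 T) :
    ∫ r in (0:ℝ)..s, K s r * K s r = s ^ (2 * H) := by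
  have h := hK.integral_mul s hs s hs
  rw [min_self, sub_self, abs_zero, zero_rpow (by positivity)] at h
  linarith

theorem lintegral_sq (hK : IsVolterraKernel H T K) (hH : 0 < H) {s : ℝ} (hs : s ∈ Ioc 0 T) :
    ∫⁻ r in Ioc 0 T, ENNReal.ofReal (K s r) ^ 2 = ENNReal.ofReal (s ^ (2 * H)) := by
  have hsIcc : s ∈ Icc 0 T := Ioc_subset_Icc_self hs
  have hdiag := hK.integral_mul_self hH hsIcc
  rw [intervalIntegral.integral_of_le hs.1.le] at hdiag
  have hint : IntegrableOn (fun r => K s r * K s r) (Ioc 0 s) := by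
    by_contra hni
    rw [integral_undef hni] at hdiag
    exact (rpow_pos_of_pos hs.1 _).ne hdiag
  have hnonneg : ∀ r ∈ Ioc 0 s, 0 ≤ K s r := fun r hr =>
    hK.nonneg s hsIcc r ⟨hr.1.le, hr.2.trans hs.2⟩
  have hvanish : ∀ r ∈ Ioc s T, ENNReal.ofReal (K s r) ^ 2 = 0 := fun r hr => by
    simp [hK.eq_zero_of_lt s hsIcc r ⟨(hs.1.trans hr.1).le, hr.2⟩ hr.1]
  rw [← Ioc_union_Ioc_eq_Ioc hs.1.le hs.2,
    lintegral_union measurableSet_Ioc (Ioc_disjoint_Ioc_of_le le_rfl),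
    setLIntegral_congr_fun measurableSet_Ioc hvanish, lintegral_zero, add_zero, ← hdiag,
    ofReal_integral_eq_lintegral_ofReal hint
      ((ae_restrict_iff' measurableSet_Ioc).2 (ae_of_all _ fun r hr =>
        mul_nonneg (hnonneg r hr) (hnonneg r hr)))]
  refine setLIntegral_congr_fun measurableSet_Ioc fun r hr => ?_
  rw [sq, ENNReal.ofReal_mul (hnonneg r hr)]

theorem lintegral_le (hK : IsVolterraKernel H T K) (hH : 0 < H) {s : ℝ} (hs : s ∈ Ioc 0 T) :
    ∫⁻ r in Ioc 0 T, ENNReal.ofReal (K s r) ≤ ENNReal.ofReal (T ^ (H + 1 / 2)) := by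
  have hT : 0 ≤ T := hs.1.le.trans hs.2
  have hCS := sq_lintegral_le_measure_univ_mul (μ := volume.restrict (Ioc 0 T))
    (hK.measurable.of_uncurry_left (x := s)).ennreal_ofReal.aemeasurable
  rw [hK.lintegral_sq hH hs, Measure.restrict_apply_univ, Real.volume_Ioc, sub_zero] at hCS
  refine (ENNReal.pow_le_pow_left_iff two_ne_zero).1 (hCS.trans ?_)
  rw [← ENNReal.ofReal_mul hT, ← ENNReal.ofReal_pow (by positivity), ← rpow_natCast,
    ← rpow_mul hT]
  refine ENNReal.ofReal_le_ofReal ?_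
  calc T * s ^ (2 * H) ≤ T * T ^ (2 * H) := by
        gcongr
        exacts [hs.1.le, hs.2]
    _ = T ^ ((H + 1 / 2) * (2 : ℕ)) := by
        rw [← rpow_one_add' hT (by positivity)]; push_cast; ring_nf

theorem lintegral_pos (hK : IsVolterraKernel H T K) (hH : 0 < H) {s : ℝ} (hs : s ∈ Ioc 0 T) :
    0 < ∫⁻ r in Ioc 0 T, ENNReal.ofReal (K s r) := by
  have hmeas := (hK.measurable.of_uncurry_left (x := s)).ennreal_ofReal
  refine pos_iff_ne_zero.2 fun h0 => ?_
  have hzero : ∫⁻ r in Ioc 0 T, ENNReal.ofReal (K s r) ^ 2 = 0 :=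
    (lintegral_eq_zero_iff (hmeas.pow_const 2)).2 <|
      ((lintegral_eq_zero_iff hmeas).1 h0).mono fun r hr => by simp [hr]
  rw [hK.lintegral_sq hH hs] at hzero
  exact (ENNReal.ofReal_pos.2 (rpow_pos_of_pos hs.1 _)).ne' hzero

theorem lintegral_lintegral_pos (hK : IsVolterraKernel H T K) (hH : 0 < H) (hT : 0 < T) :
    0 < ∫⁻ s in Ioc 0 T, ∫⁻ r in Ioc 0 T, ENNReal.ofReal (K s r) := by
  rw [setLIntegral_pos_iff (f := fun s => ∫⁻ r in Ioc 0 T, ENNReal.ofReal (K s r))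
    hK.measurable.ennreal_ofReal.lintegral_prod_right',
    inter_eq_right.2 fun s hs => Function.mem_support.2 (hK.lintegral_pos hH hs).ne',
    Real.volume_Ioc]
  simpa using hT

theorem lintegral_sq_lintegral_lt_top (hK : IsVolterraKernel H T K) (hH : 0 < H) :
    ∫⁻ r in Ioc 0 T, (∫⁻ s in Ioc 0 T, ENNReal.ofReal (K s r)) ^ 2 < ⊤ := by
  set ν := volume.restrict (Ioc (0:ℝ) T)
  have hk : Measurable (Function.uncurry fun s r => ENNReal.ofReal (K s r) ^ 2) :=
    hK.measurable.ennreal_ofReal.pow_const 2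
  calc ∫⁻ r, (∫⁻ s, ENNReal.ofReal (K s r) ∂ν) ^ 2 ∂ν
      ≤ ∫⁻ r, ν univ * ∫⁻ s, ENNReal.ofReal (K s r) ^ 2 ∂ν ∂ν :=
        lintegral_mono fun r => sq_lintegral_le_measure_univ_mul
          (hK.measurable.of_uncurry_right (y := r)).ennreal_ofReal.aemeasurable
    _ = ν univ * ∫⁻ s, ∫⁻ r, ENNReal.ofReal (K s r) ^ 2 ∂ν ∂ν := by
        rw [lintegral_const_mul'' _ hk.aemeasurable.lintegral_prod_left, lintegral_lintegral_swap
          (f := fun r s => ENNReal.ofReal (K s r) ^ 2) (hk.comp measurable_swap).aemeasurable]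
    _ ≤ ν univ * ∫⁻ _, ENNReal.ofReal (T ^ (2 * H)) ∂ν := by
        gcongr ν univ * ?_
        refine setLIntegral_mono measurable_const fun s hs => ?_
        rw [hK.lintegral_sq hH hs]
        exact ENNReal.ofReal_le_ofReal (rpow_le_rpow hs.1.le hs.2 (by positivity))
    _ < ⊤ := by simp [ν, ENNReal.mul_lt_top]

theorem lintegral_lintegral_lt_top (hK : IsVolterraKernel H T K) (hH : 0 < H) :
    ∫⁻ s in Ioc 0 T, ∫⁻ r in Ioc 0 T, ENNReal.ofReal (K s r) < ⊤ := calc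
  _ ≤ ∫⁻ _ in Ioc 0 T, ENNReal.ofReal (T ^ (H + 1 / 2)) :=
      setLIntegral_mono' measurableSet_Ioc fun s hs => hK.lintegral_le hH hs
  _ < ⊤ := by simp [ENNReal.mul_lt_top]

theorem lintegral_sq_lintegral_mul_lt_top (hK : IsVolterraKernel H T K) (hH : 0 < H)
    {F : ℝ → ℝ≥0∞} {M : ℝ≥0∞} (hM : M ≠ ⊤) (hF : ∀ s ∈ Ioc 0 T, F s ≤ M) :
    ∫⁻ r in Ioc 0 T, (∫⁻ s in Ioc 0 T, ENNReal.ofReal (K s r) * F s) ^ 2 < ⊤ := calc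
  _ ≤ ∫⁻ r in Ioc 0 T, (∫⁻ s in Ioc 0 T, ENNReal.ofReal (K s r) * M) ^ 2 :=
      lintegral_mono fun r => pow_le_pow_left' (setLIntegral_mono' measurableSet_Ioc
        fun s hs => by gcongr; exact hF s hs) 2
  _ = M ^ 2 * ∫⁻ r in Ioc 0 T, (∫⁻ s in Ioc 0 T, ENNReal.ofReal (K s r)) ^ 2 := by
      simp_rw [lintegral_mul_const' _ _ hM, mul_pow]
      rw [lintegral_mul_const' _ _ (ENNReal.pow_ne_top hM), mul_comm]
  _ < ⊤ := ENNReal.mul_lt_top (ENNReal.pow_lt_top hM.lt_top) (hK.lintegral_sq_lintegral_lt_top hH)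

theorem intervalIntegral_mul_eq_toReal (hK : IsVolterraKernel H T K) {f : ℝ → ℝ}
    (hf : AEMeasurable f (volume.restrict (Ioc 0 T))) (hf0 : ∀ s, 0 ≤ f s) {r : ℝ}
    (hr : r ∈ Ioc 0 T) :
    ∫ s in r..T, K s r * f s
      = (∫⁻ s in Ioc 0 T, ENNReal.ofReal (K s r) * ENNReal.ofReal (f s)).toReal := by
  have hrIcc : r ∈ Icc 0 T := Ioc_subset_Icc_self hr
  have hnonneg : ∀ s ∈ Ioc r T, 0 ≤ K s r := fun s hs =>
    hK.nonneg s ⟨(hr.1.trans hs.1).le, hs.2⟩ r hrIcc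
  have hvanish : ∀ s ∈ Ioo 0 r, ENNReal.ofReal (K s r) * ENNReal.ofReal (f s) = 0 := fun s hs => by
    simp [hK.eq_zero_of_lt s ⟨hs.1.le, hs.2.le.trans hr.2⟩ r hrIcc hs.2]
  have hmeas : AEStronglyMeasurable (fun s => K s r * f s) (volume.restrict (Ioc r T)) :=
    ((hK.measurable.of_uncurry_right (y := r)).aemeasurable.mul (hf.mono_measure
      (Measure.restrict_mono (Ioc_subset_Ioc_left hr.1.le) le_rfl))).aestronglyMeasurable
  rw [intervalIntegral.integral_of_le hr.2, integral_eq_lintegral_of_nonneg_ae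
    ((ae_restrict_iff' measurableSet_Ioc).2 (ae_of_all _ fun s hs =>
      mul_nonneg (hnonneg s hs) (hf0 s))) hmeas,
    ← Ioc_union_Ioc_eq_Ioc hr.1.le hr.2,
    lintegral_union measurableSet_Ioc (Ioc_disjoint_Ioc_of_le le_rfl),
    ← setLIntegral_congr (Ioo_ae_eq_Ioc (a := (0:ℝ)) (b := r)),
    setLIntegral_congr_fun measurableSet_Ioo hvanish,
    lintegral_zero, zero_add]
  congr 1
  exact setLIntegral_congr_fun measurableSet_Ioc fun s hs => ENNReal.ofReal_mul (hnonneg s hs)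

theorem integral_sq_eq_toReal (hK : IsVolterraKernel H T K) (hT : 0 ≤ T) {f : ℝ → ℝ}
    (hf : AEMeasurable f (volume.restrict (Ioc 0 T))) (hf0 : ∀ s, 0 ≤ f s)
    (hfin : ∫⁻ r in Ioc 0 T,
      (∫⁻ s in Ioc 0 T, ENNReal.ofReal (K s r) * ENNReal.ofReal (f s)) ^ 2 < ⊤) :
    ∫ r in (0:ℝ)..T, (∫ s in r..T, K s r * f s) ^ 2
      = (∫⁻ r in Ioc 0 T,
          (∫⁻ s in Ioc 0 T, ENNReal.ofReal (K s r) * ENNReal.ofReal (f s)) ^ 2).toReal := by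
  have hinner : AEMeasurable
      (fun r => ∫⁻ s in Ioc 0 T, ENNReal.ofReal (K s r) * ENNReal.ofReal (f s))
      (volume.restrict (Ioc 0 T)) :=
    AEMeasurable.lintegral_prod_left
      (hK.measurable.ennreal_ofReal.aemeasurable.mul hf.ennreal_ofReal.comp_fst)
  rw [intervalIntegral.integral_of_le hT, setIntegral_congr_fun measurableSet_Ioc fun r hr => by
      rw [hK.intervalIntegral_mul_eq_toReal hf hf0 hr, ← ENNReal.toReal_pow],
    integral_toReal (hinner.pow_const 2) (ae_lt_top' (hinner.pow_const 2) hfin.ne)]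

theorem exists_pos_le_integral_sq_mul_sq (hK : IsVolterraKernel H T K) (hH : 0 < H)
    (hT : 0 < T) :
    ∃ D > 0, ∀ φ : ℝ → ℝ, ContinuousOn φ (Icc 0 T) →
      D ≤ (∫ r in (0:ℝ)..T, (∫ s in r..T, K s r * exp (φ s)) ^ 2)
        * (∫ s in (0:ℝ)..T, exp (-φ s)) ^ 2 := by
  set ν := volume.restrict (Ioc (0:ℝ) T)
  have hν : ν univ = ENNReal.ofReal T := by simp [ν]
  set c := ∫⁻ s, ∫⁻ r, ENNReal.ofReal (K s r) ∂ν ∂ν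
  set W := ENNReal.ofReal (T ^ (H + 1 / 2))
  have hc : 0 < c.toReal := ENNReal.toReal_pos (hK.lintegral_lintegral_pos hH hT).ne'
    (hK.lintegral_lintegral_lt_top hH).ne
  have hW : W.toReal = T ^ (H + 1 / 2) := ENNReal.toReal_ofReal (by positivity)
  refine ⟨c.toReal ^ 4 / (T * W.toReal ^ 2), by rw [hW]; positivity, fun φ hφ => ?_⟩
  obtain ⟨C, hC⟩ := isCompact_Icc.exists_bound_of_continuousOn hφ.rexp
  have hφm : AEMeasurable φ ν := (hφ.mono Ioc_subset_Icc_self).aemeasurable measurableSet_Ioc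
  have hF : AEMeasurable (fun s => exp (φ s)) ν := hφm.exp
  have hG : AEMeasurable (fun s => exp (-φ s)) ν := hφm.neg.exp
  have hA := hK.lintegral_sq_lintegral_mul_lt_top hH (F := fun s => ENNReal.ofReal (exp (φ s)))
    ENNReal.ofReal_ne_top fun s hs =>
      ENNReal.ofReal_le_ofReal ((le_norm_self _).trans (hC s (Ioc_subset_Icc_self hs)))
  have hL : ∫⁻ s, ENNReal.ofReal (exp (-φ s)) ∂ν < ⊤ :=
    (hφ.neg.rexp.integrableOn_Icc.mono_set Ioc_subset_Icc_self).lintegral_lt_top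
  have key := pow_four_lintegral_lintegral_le (μ := ν) (k := fun s r => ENNReal.ofReal (K s r))
    hK.measurable.ennreal_ofReal.aemeasurable hF.ennreal_ofReal hG.ennreal_ofReal
    (fun s => by rw [← ENNReal.ofReal_mul (exp_pos _).le, ← exp_add, add_neg_cancel, exp_zero,
      ENNReal.ofReal_one])
    ((ae_restrict_mem measurableSet_Ioc).mono fun s hs => hK.lintegral_le hH hs)
  rw [hν] at key
  have hkey := ENNReal.toReal_mono (by finiteness) key
  simp only [ENNReal.toReal_mul, ENNReal.toReal_pow, ENNReal.toReal_ofReal hT.le] at hkey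
  rw [hK.integral_sq_eq_toReal hT.le hF (fun s => (exp_pos _).le) hA,
    intervalIntegral.integral_of_le hT.le, integral_eq_lintegral_of_nonneg_ae
      (ae_of_all _ fun s => (exp_pos _).le) hG.aestronglyMeasurable,
    div_le_iff₀ (by rw [hW]; positivity)]
  linarith

theorem exists_ofReal_rpow_neg_le (hK : IsVolterraKernel H T K) (hH : 0 < H) (hT : 0 < T)
    {σ p : ℝ} (hσ : σ ≠ 0) (hp : 0 ≤ p) :
    ∃ C < ⊤, ∀ φ : ℝ → ℝ, ContinuousOn φ (Icc 0 T) →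
      ENNReal.ofReal ((∫ r in (0:ℝ)..T, (∫ s in r..T, σ * K s r * exp (φ s)) ^ 2) ^ (-p))
        ≤ C * (∫⁻ s in Ioc 0 T, ENNReal.ofReal (exp (-φ s))) ^ (2 * p) := by
  obtain ⟨D, hD, hpath⟩ := hK.exists_pos_le_integral_sq_mul_sq hH hT
  refine ⟨ENNReal.ofReal ((σ ^ 2 * D) ^ (-p)), ENNReal.ofReal_lt_top, fun φ hφ => ?_⟩
  have hL : IntegrableOn (fun s => exp (-φ s)) (Ioc 0 T) :=
    (hφ.neg.rexp.integrableOn_Icc).mono_set Ioc_subset_Icc_self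
  have hL0 : 0 ≤ ∫ s in (0:ℝ)..T, exp (-φ s) :=
    intervalIntegral.integral_nonneg hT.le fun s _ => (exp_pos _).le
  simp_rw [mul_assoc σ, intervalIntegral.integral_const_mul, mul_pow,
    intervalIntegral.integral_const_mul]
  rw [← ofReal_integral_eq_lintegral_ofReal hL (ae_of_all _ fun s => (exp_pos _).le),
    ← intervalIntegral.integral_of_le hT.le, ENNReal.ofReal_rpow_of_nonneg hL0 (by linarith),
    ← ENNReal.ofReal_mul (by positivity)]
  refine ENNReal.ofReal_le_ofReal (rpow_neg_le_of_le_mul_sq (by positivity) hL0 hp ?_)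
  rw [mul_assoc]
  exact mul_le_mul_of_nonneg_left (hpath φ hφ) (sq_nonneg σ)

end IsVolterraKernel

namespace ProbabilityTheory

variable {Ω : Type*} [MeasurableSpace Ω] {P : Measure Ω}

theorem HasLaw.lintegral_exp_mul_of_gaussianReal {Y : Ω → ℝ} {m : ℝ} {v : ℝ≥0}
    (hY : HasLaw Y (gaussianReal m v) P) (t : ℝ) :
    ∫⁻ ω, ENNReal.ofReal (exp (t * Y ω)) ∂P = ENNReal.ofReal (exp (m * t + v * t ^ 2 / 2)) := by
  rw [hY.lintegral_comp (f := fun x => ENNReal.ofReal (exp (t * x))) (by fun_prop),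
    ← ofReal_integral_eq_lintegral_ofReal (integrable_exp_mul_gaussianReal t)
      (ae_of_all _ fun _ => (exp_pos _).le)]
  exact congrArg ENNReal.ofReal (congrFun mgf_fun_id_gaussianReal t)

end ProbabilityTheory

namespace IsFractionalBM

variable {Ω : Type*} [MeasurableSpace Ω] {P : Measure Ω} {H T : ℝ} {B : ℝ → Ω → ℝ}

theorem hasLaw (hB : IsFractionalBM P H T B) (hH : 0 < H) {s : ℝ} (hs : s ∈ Icc 0 T) :
    HasLaw (B s) (gaussianReal 0 (s ^ (2 * H)).toNNReal) P := by
  obtain ⟨v, hv⟩ := hB.2.2.1 1 (fun _ => 1) (fun _ => s) (fun _ => hs)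
  simp only [Finset.univ_unique, Finset.sum_singleton, one_mul] at hv
  have hlaw : HasLaw (B s) (gaussianReal 0 v) P := ⟨(hB.2.1 s hs).aemeasurable, hv⟩
  have hsecond := hB.2.2.2 s hs s hs
  rw [sub_self, abs_zero, zero_rpow (by positivity), sub_zero, add_self_div_two] at hsecond
  have hv_eq : (v : ℝ) = s ^ (2 * H) := by
    rw [← hsecond, ← variance_id_gaussianReal (μ := 0) (v := v), ← hlaw.variance_eq,
      variance_eq_integral hlaw.aemeasurable, hlaw.integral_eq, integral_id_gaussianReal]
    simp [sq]
  rwa [← hv_eq, Real.toNNReal_coe]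

theorem exists_hasLaw_neg_affine (hB : IsFractionalBM P H T B) (hH : 0 < H) (a σ : ℝ) {s : ℝ}
    (hs : s ∈ Ioc 0 T) :
    ∃ (m : ℝ) (v : ℝ≥0), m ≤ |a| * T ∧ (v : ℝ) ≤ σ ^ 2 * T ^ (2 * H) ∧
      HasLaw (fun ω => -(a * s + σ * B s ω)) (gaussianReal m v) P := by
  refine ⟨_, _, ?_, ?_, gaussianReal_neg (gaussianReal_const_add
    (gaussianReal_const_mul (hB.hasLaw hH (Ioc_subset_Icc_self hs)) σ) (a * s))⟩
  · nlinarith [neg_abs_le a, abs_nonneg a, hs.1, hs.2]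
  · rw [NNReal.coe_mul, NNReal.coe_mk, Real.coe_toNNReal _ (rpow_nonneg hs.1.le _)]
    exact mul_le_mul_of_nonneg_left (rpow_le_rpow hs.1.le hs.2 (by positivity)) (sq_nonneg σ)

end IsFractionalBM

theorem measurable_uncurry_projIcc {Ω : Type*} [MeasurableSpace Ω] {X : ℝ → Ω → ℝ} {a b : ℝ}
    (hab : a ≤ b) (hcont : ∀ ω, ContinuousOn (fun s => X s ω) (Icc a b))
    (hmeas : ∀ s ∈ Icc a b, Measurable (X s)) :
    Measurable (Function.uncurry fun s ω => X (projIcc a b hab s) ω) :=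
  measurable_uncurry_of_continuous_of_measurable
    (fun ω => (hcont ω).comp_continuous continuous_projIcc.subtype_val fun s =>
      (projIcc a b hab s).2)
    (fun s => hmeas _ (projIcc a b hab s).2)

theorem lintegral_rpow_setLIntegral_exp_lt_top {Ω : Type*} [MeasurableSpace Ω] {P : Measure Ω}
    [SFinite P] {Y : ℝ → Ω → ℝ} {T M V q : ℝ} (hT : 0 ≤ T) (hq : 1 < q)
    (hcont : ∀ ω, ContinuousOn (fun s => Y s ω) (Icc 0 T))
    (hmeas : ∀ s ∈ Icc 0 T, Measurable (Y s))
    (hlaw : ∀ s ∈ Ioc 0 T, ∃ (m : ℝ) (v : ℝ≥0), m ≤ M ∧ (v : ℝ) ≤ V ∧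
      HasLaw (Y s) (gaussianReal m v) P) :
    ∫⁻ ω, (∫⁻ s in Ioc 0 T, ENNReal.ofReal (exp (Y s ω))) ^ q ∂P < ⊤ := by
  set ν := volume.restrict (Ioc (0:ℝ) T)
  have hjoint : AEMeasurable
      (Function.uncurry fun ω s => ENNReal.ofReal (exp (q * Y s ω))) (P.prod ν) := by
    refine (((measurable_uncurry_projIcc hT hcont hmeas).comp measurable_swap).const_mul q
      |>.exp.ennreal_ofReal.aemeasurable).congr ?_
    filter_upwards [Measure.quasiMeasurePreserving_snd.ae (ae_restrict_mem measurableSet_Ioc)]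
      with ⟨ω, s⟩ hs
    simp only [Function.comp_apply, Prod.swap_prod_mk, Function.uncurry_apply_pair,
      projIcc_of_mem hT (Ioc_subset_Icc_self hs)]
  have hJensen : ∀ ω, (∫⁻ s, ENNReal.ofReal (exp (Y s ω)) ∂ν) ^ q
      ≤ ν univ ^ (q - 1) * ∫⁻ s, ENNReal.ofReal (exp (q * Y s ω)) ∂ν := fun ω => by
    have hm : AEMeasurable (fun s => ENNReal.ofReal (exp (Y s ω))) ν :=
      (((hcont ω).mono Ioc_subset_Icc_self).aemeasurable measurableSet_Ioc).exp.ennreal_ofReal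
    refine (rpow_lintegral_le hm hq).trans_eq ?_
    simp_rw [ENNReal.ofReal_rpow_of_nonneg (exp_pos _).le (by linarith : (0:ℝ) ≤ q), ← exp_mul,
      mul_comm _ q]
  have hmgf : ∀ s ∈ Ioc 0 T, ∫⁻ ω, ENNReal.ofReal (exp (q * Y s ω)) ∂P
      ≤ ENNReal.ofReal (exp (M * q + V * q ^ 2 / 2)) := fun s hs => by
    obtain ⟨m, v, hm, hv, hY⟩ := hlaw s hs
    rw [hY.lintegral_exp_mul_of_gaussianReal]
    gcongr
  calc ∫⁻ ω, (∫⁻ s, ENNReal.ofReal (exp (Y s ω)) ∂ν) ^ q ∂P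
      ≤ ∫⁻ ω, ν univ ^ (q - 1) * ∫⁻ s, ENNReal.ofReal (exp (q * Y s ω)) ∂ν ∂P :=
        lintegral_mono hJensen
    _ = ν univ ^ (q - 1) * ∫⁻ s, ∫⁻ ω, ENNReal.ofReal (exp (q * Y s ω)) ∂P ∂ν := by
        rw [lintegral_const_mul'' _ hjoint.lintegral_prod_right, lintegral_lintegral_swap hjoint]
    _ ≤ ν univ ^ (q - 1) * ∫⁻ _, ENNReal.ofReal (exp (M * q + V * q ^ 2 / 2)) ∂ν := by
        gcongr ν univ ^ (q - 1) * ?_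
        exact setLIntegral_mono' measurableSet_Ioc hmgf
    _ < ⊤ := by
        simp [ν, ENNReal.mul_lt_top, ENNReal.rpow_lt_top_of_nonneg (by linarith : 0 ≤ q - 1)]

theorem malliavin_norm_inv_moments {Ω : Type*} [MeasurableSpace Ω] (P : Measure Ω)
    [IsProbabilityMeasure P] (H T a σ : ℝ) (hH : H ∈ Set.Ioo (0:ℝ) 1) (hT : 0 < T)
    (hσ : 0 < σ)
    (K : ℝ → ℝ → ℝ)
    (hKmeas : Measurable (Function.uncurry K))
    (hKnonneg : ∀ s ∈ Icc (0:ℝ) T, ∀ r ∈ Icc (0:ℝ) T, 0 ≤ K s r)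
    (hKzero : ∀ s ∈ Icc (0:ℝ) T, ∀ r ∈ Icc (0:ℝ) T, s < r → K s r = 0)
    (hKcov : ∀ s ∈ Icc (0:ℝ) T, ∀ t ∈ Icc (0:ℝ) T,
      ∫ r in (0:ℝ)..(min s t), K s r * K t r
        = (s ^ (2*H) + t ^ (2*H) - |t - s| ^ (2*H)) / 2)
    (B : ℝ → Ω → ℝ) (hB : IsFractionalBM P H T B) :
    ∀ p : ℝ, 1 ≤ p →
      (∫⁻ ω, ENNReal.ofReal
          ((∫ r in (0:ℝ)..T,
              (∫ s in r..T, σ * K s r * Real.exp (a * s + σ * B s ω)) ^ 2) ^ (-p)) ∂P)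
        < ⊤ := by
  intro p hp
  have hK : IsVolterraKernel H T K := ⟨hKmeas, hKnonneg, hKzero, hKcov⟩
  obtain ⟨C, hC, hpath⟩ := hK.exists_ofReal_rpow_neg_le hH.1 hT hσ.ne' (p := p) (by linarith)
  have hφ : ∀ ω, ContinuousOn (fun s => a * s + σ * B s ω) (Icc 0 T) := fun ω =>
    (continuousOn_const.mul continuousOn_id).add (continuousOn_const.mul (hB.1 ω))
  calc _ ≤ ∫⁻ ω, C * (∫⁻ s in Ioc 0 T, ENNReal.ofReal (exp (-(a * s + σ * B s ω)))) ^ (2 * p) ∂P :=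
        lintegral_mono fun ω => hpath _ (hφ ω)
    _ = C * ∫⁻ ω, (∫⁻ s in Ioc 0 T, ENNReal.ofReal (exp (-(a * s + σ * B s ω)))) ^ (2 * p) ∂P :=
        lintegral_const_mul' _ _ hC.ne
    _ < ⊤ := ENNReal.mul_lt_top hC <| lintegral_rpow_setLIntegral_exp_lt_top hT.le
        (by linarith) (fun ω => (hφ ω).neg)
        (fun s hs => (((hB.2.1 s hs).const_mul σ).const_add (a * s)).neg)
        fun s hs => hB.exists_hasLaw_neg_affine hH.1 a σ hs
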